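/- arXiv:2005.05458 — 4 statements merged into one kernel-verified Lean document; each statement's English description precedes it below -/
import Mathlib

section
/- For every σ > 0 and h ≥ 0, the Rician density integrated against the Rayleigh distribution of the cluster-center distance satisfies ∫_0^∞ (v/σ²) e^{−v²/(2σ²)} · (h/σ²) e^{−(v²+h²)/(2σ²)} I_0(hv/σ²) dv = (h/(2σ²)) e^{−h²/(4σ²)}, i.e., mixing Rice(h; v, σ) over V ~ Rayleigh(σ) yields Rayleigh(√2 σ). -/
/-! With `b = 1/σ²` and `c = h/σ²` the integrand is a constant multiple of `v e^{-b v²} I₀(c v)`.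
Since `2π I₀(z) = ∫_{-π}^{π} e^{z cos θ} dθ`, the integral `2π ∫_0^∞ v e^{-b v²} I₀(c v) dv` is the
planar integral `∫_{ℝ²} e^{-b (x² + y²) + c x}` written in polar coordinates, and that Gaussian
integral splits into two one-dimensional ones: completing the square gives `(π/b) e^{c²/(4b)}`. -/

open MeasureTheory Real

/-- Modified Bessel function of the first kind of order zero,
`I₀(z) = (1/π) ∫_0^π exp (z cos θ) dθ`. -/
noncomputable def besselI0 (z : ℝ) : ℝ :=
  (1 / π) * ∫ θ in (0 : ℝ)..π, Real.exp (z * Real.cos θ)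

open Set

theorem exp_neg_mul_sq_add_mul_eq {b : ℝ} (hb : b ≠ 0) (c x : ℝ) :
    exp (-b * x ^ 2 + c * x) = exp (-b * (x - c / (2 * b)) ^ 2) * exp (c ^ 2 / (4 * b)) := by
  rw [← exp_add]
  congr 1
  field_simp
  ring

theorem integrable_exp_neg_mul_sq_add_mul {b : ℝ} (hb : 0 < b) (c : ℝ) :
    Integrable fun x : ℝ => exp (-b * x ^ 2 + c * x) := by
  simp_rw [exp_neg_mul_sq_add_mul_eq hb.ne']
  exact ((integrable_exp_neg_mul_sq hb).comp_sub_right _).mul_const _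

theorem integral_exp_neg_mul_sq_add_mul {b : ℝ} (hb : 0 < b) (c : ℝ) :
    ∫ x : ℝ, exp (-b * x ^ 2 + c * x) = √(π / b) * exp (c ^ 2 / (4 * b)) := by
  simp_rw [exp_neg_mul_sq_add_mul_eq hb.ne']
  rw [integral_mul_const, integral_sub_right_eq_self (fun x => exp (-b * x ^ 2)),
    integral_gaussian]

theorem exp_neg_mul_sq_add_sq_add_mul_eq (b c : ℝ) (p : ℝ × ℝ) :
    exp (-b * (p.1 ^ 2 + p.2 ^ 2) + c * p.1)
      = exp (-b * p.1 ^ 2 + c * p.1) * exp (-b * p.2 ^ 2) := by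
  rw [← exp_add]
  ring_nf

theorem integrable_exp_neg_mul_sq_add_sq_add_mul_fst {b : ℝ} (hb : 0 < b) (c : ℝ) :
    Integrable fun p : ℝ × ℝ => exp (-b * (p.1 ^ 2 + p.2 ^ 2) + c * p.1) := by
  simp_rw [exp_neg_mul_sq_add_sq_add_mul_eq]
  exact (integrable_exp_neg_mul_sq_add_mul hb c).mul_prod (integrable_exp_neg_mul_sq hb)

theorem integral_exp_neg_mul_sq_add_sq_add_mul_fst {b : ℝ} (hb : 0 < b) (c : ℝ) :
    ∫ p : ℝ × ℝ, exp (-b * (p.1 ^ 2 + p.2 ^ 2) + c * p.1) = π / b * exp (c ^ 2 / (4 * b)) := by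
  simp_rw [exp_neg_mul_sq_add_sq_add_mul_eq]
  rw [Measure.volume_eq_prod, integral_prod_mul (fun x => exp (-b * x ^ 2 + c * x))
    (fun y => exp (-b * y ^ 2)), integral_exp_neg_mul_sq_add_mul hb, integral_gaussian]
  calc √(π / b) * exp (c ^ 2 / (4 * b)) * √(π / b)
      = √(π / b) * √(π / b) * exp (c ^ 2 / (4 * b)) := by ring
    _ = π / b * exp (c ^ 2 / (4 * b)) := by rw [mul_self_sqrt (by positivity)]

theorem integrableOn_comp_polarCoord_symm {E : Type*} [NormedAddCommGroup E] [NormedSpace ℝ E]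
    {f : ℝ × ℝ → E} (hf : Integrable f) :
    IntegrableOn (fun p => p.1 • f (polarCoord.symm p)) polarCoord.target := by
  have hchange := integrableOn_image_iff_integrableOn_abs_det_fderiv_smul volume
    polarCoord.open_target.measurableSet
    (fun p _ => (hasFDerivAt_polarCoord_symm p).hasFDerivWithinAt) polarCoord.symm.injOn f
  rw [polarCoord.symm_image_target_eq_source] at hchange
  refine (hchange.mp hf.integrableOn).congr_fun (fun p hp => ?_)
    polarCoord.open_target.measurableSet
  simp only [det_fderivPolarCoordSymm, abs_of_pos (mem_Ioi.mp hp.1)]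

theorem integral_Ioo_neg_pi_pi_exp_mul_cos (z : ℝ) :
    ∫ θ in Ioo (-π) π, exp (z * cos θ) = 2 * π * besselI0 z := by
  have hint (a b : ℝ) : IntervalIntegrable (fun θ => exp (z * cos θ)) volume a b :=
    (by fun_prop : Continuous fun θ => exp (z * cos θ)).intervalIntegrable a b
  have hsymm : ∫ θ in (0 : ℝ)..π, exp (z * cos θ) = ∫ θ in (-π)..0, exp (z * cos θ) := by
    simpa only [cos_neg, neg_zero] using
      intervalIntegral.integral_comp_neg (a := 0) (b := π) fun θ => exp (z * cos θ)
  rw [← integral_Ioc_eq_integral_Ioo, ← intervalIntegral.integral_of_le (by linarith [pi_pos]),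
    ← intervalIntegral.integral_add_adjacent_intervals (hint _ 0) (hint 0 _), ← hsymm, besselI0]
  field_simp
  ring

theorem integral_Ioi_mul_exp_neg_mul_sq_mul_besselI0 {b : ℝ} (hb : 0 < b) (c : ℝ) :
    ∫ v in Ioi 0, v * exp (-b * v ^ 2) * besselI0 (c * v) = exp (c ^ 2 / (4 * b)) / (2 * b) := by
  set F : ℝ × ℝ → ℝ := fun p => exp (-b * (p.1 ^ 2 + p.2 ^ 2) + c * p.1)
  set g : ℝ × ℝ → ℝ := fun p => p.1 * exp (-b * p.1 ^ 2) * exp (c * p.1 * cos p.2)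
  have hpolar : ∀ p, p.1 • F (polarCoord.symm p) = g p := fun p => by
    simp only [F, g, polarCoord_symm_apply, smul_eq_mul, mul_assoc, ← exp_add]
    congr 2
    linear_combination (-(b * p.1 ^ 2)) * sin_sq_add_cos_sq p.2
  have hg : IntegrableOn g (Ioi 0 ×ˢ Ioo (-π) π) := by
    simpa only [hpolar, polarCoord_target] using integrableOn_comp_polarCoord_symm (f := F)
      (integrable_exp_neg_mul_sq_add_sq_add_mul_fst hb c)
  have hangle (v : ℝ) : ∫ θ in Ioo (-π) π, g (v, θ)
      = 2 * π * (v * exp (-b * v ^ 2) * besselI0 (c * v)) := by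
    simp only [g]
    rw [integral_const_mul, integral_Ioo_neg_pi_pi_exp_mul_cos]
    ring
  have hF : ∫ p, F p = π / b * exp (c ^ 2 / (4 * b)) :=
    integral_exp_neg_mul_sq_add_sq_add_mul_fst hb c
  have hplane : 2 * π * ∫ v in Ioi 0, v * exp (-b * v ^ 2) * besselI0 (c * v)
      = π / b * exp (c ^ 2 / (4 * b)) := by
    rw [← hF, ← integral_comp_polarCoord_symm, polarCoord_target]
    simp only [hpolar]
    rw [Measure.volume_eq_prod, setIntegral_prod _ hg]
    simp only [hangle, integral_const_mul]
  generalize (∫ v in Ioi 0, v * exp (-b * v ^ 2) * besselI0 (c * v)) = K at hplane ⊢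
  field_simp at hplane ⊢
  linear_combination hplane

theorem rician_rayleigh_mixing_general
    (σ : ℝ) (hσ : 0 < σ) (h : ℝ) :
    ∫ v in Set.Ioi (0 : ℝ),
        (v / σ ^ 2 * Real.exp (-v ^ 2 / (2 * σ ^ 2))) *
          (h / σ ^ 2 * Real.exp (-(v ^ 2 + h ^ 2) / (2 * σ ^ 2))) *
            besselI0 (h * v / σ ^ 2) =
      h / (2 * σ ^ 2) * Real.exp (-h ^ 2 / (4 * σ ^ 2)) := by
  have hσ2 : σ ^ 2 ≠ 0 := by positivity
  have hintegrand (v : ℝ) :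
      (v / σ ^ 2 * exp (-v ^ 2 / (2 * σ ^ 2))) *
          (h / σ ^ 2 * exp (-(v ^ 2 + h ^ 2) / (2 * σ ^ 2))) * besselI0 (h * v / σ ^ 2)
        = h / σ ^ 4 * exp (-h ^ 2 / (2 * σ ^ 2)) *
            (v * exp (-(σ ^ 2)⁻¹ * v ^ 2) * besselI0 (h / σ ^ 2 * v)) := by
    rw [show h * v / σ ^ 2 = h / σ ^ 2 * v by ring]
    have hexp : exp (-v ^ 2 / (2 * σ ^ 2)) * exp (-(v ^ 2 + h ^ 2) / (2 * σ ^ 2))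
        = exp (-h ^ 2 / (2 * σ ^ 2)) * exp (-(σ ^ 2)⁻¹ * v ^ 2) := by
      rw [← exp_add, ← exp_add]
      congr 1
      field_simp
      ring
    linear_combination (v * h / σ ^ 4 * besselI0 (h / σ ^ 2 * v)) * hexp
  have hexponent : -h ^ 2 / (2 * σ ^ 2) + (h / σ ^ 2) ^ 2 / (4 * (σ ^ 2)⁻¹)
      = -h ^ 2 / (4 * σ ^ 2) := by
    field_simp
    ring
  simp_rw [hintegrand]
  rw [integral_const_mul, integral_Ioi_mul_exp_neg_mul_sq_mul_besselI0 (by positivity),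
    mul_div_assoc', mul_assoc (h / σ ^ 4), ← exp_add, hexponent]
  field_simp

/-- Mixing the Rician density `Rice(h; v, σ)` over a Rayleigh(σ)-distributed
center distance `V` yields the Rayleigh(√2 σ) density:
`∫_0^∞ (v/σ²) e^{−v²/(2σ²)} (h/σ²) e^{−(v²+h²)/(2σ²)} I₀(hv/σ²) dv
  = (h/(2σ²)) e^{−h²/(4σ²)}`. -/
theorem rician_rayleigh_mixing
    (σ : ℝ) (hσ : 0 < σ) (h : ℝ) (hh : 0 ≤ h) :
    ∫ v in Set.Ioi (0 : ℝ),
        (v / σ ^ 2 * Real.exp (-v ^ 2 / (2 * σ ^ 2))) *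
          (h / σ ^ 2 * Real.exp (-(v ^ 2 + h ^ 2) / (2 * σ ^ 2))) *
            besselI0 (h * v / σ ^ 2) =
      h / (2 * σ ^ 2) * Real.exp (-h ^ 2 / (4 * σ ^ 2)) :=
  rician_rayleigh_mixing_general σ hσ h
end

section
/- For α > 2 and t > 0, the integral ∫_0^∞ (1 − 1/(1 + t·u^{−α})) u du equals (t^{2/α}/2) · Γ(1 + 2/α) · Γ(1 − 2/α). Equivalently, ∫_0^∞ t/(u^α + t) · u du = (t^{2/α}/2) Γ(1+2/α) Γ(1−2/α). -/
/-!
Writing `1 / (1 + x) = ∫₀^∞ exp (-(1 + x) y) dy` and swapping the order of integration gives the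
Mellin transform `∫₀^∞ x ^ (s - 1) / (1 + x) dx = Γ(s) Γ(1 - s)` for `0 < s < 1`. The radial
integrand is `t u / (u ^ α + t)`; the substitutions `y = u ^ α` and `y = t x` turn its integral
into that Mellin transform at `s = 2 / α`, and `Γ(1 + s) = s Γ(s)` absorbs the Jacobian `1 / α`.
-/

open MeasureTheory Real Set Function

section Tonelli

variable {α β : Type*} [MeasurableSpace α] [MeasurableSpace β] {μ : Measure α} {ν : Measure β}
  [SFinite ν]

theorem integral_integral_eq_toReal_lintegral_lintegral {f : α → β → ℝ}
    (hf : AEStronglyMeasurable (uncurry f) (μ.prod ν)) (hf0 : 0 ≤ᵐ[μ.prod ν] uncurry f)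
    (hint : ∀ᵐ x ∂μ, Integrable (f x) ν) :
    ∫ x, ∫ y, f x y ∂ν ∂μ = (∫⁻ x, ∫⁻ y, ENNReal.ofReal (f x y) ∂ν ∂μ).toReal := by
  have hslice : ∀ᵐ x ∂μ, 0 ≤ᵐ[ν] f x := Measure.ae_ae_of_ae_prod hf0
  rw [integral_eq_lintegral_of_nonneg_ae
    (hslice.mono fun x hx => integral_nonneg_of_ae hx) hf.integral_prod_right']
  congr 1
  refine lintegral_congr_ae ?_
  filter_upwards [hint, hslice] with x hx hx0
  exact ofReal_integral_eq_lintegral_ofReal hx hx0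

theorem integral_integral_swap_of_nonneg [SFinite μ] {f : α → β → ℝ}
    (hf : AEStronglyMeasurable (uncurry f) (μ.prod ν)) (hf0 : 0 ≤ᵐ[μ.prod ν] uncurry f)
    (hx : ∀ᵐ x ∂μ, Integrable (f x) ν) (hy : ∀ᵐ y ∂ν, Integrable (fun x => f x y) μ) :
    ∫ x, ∫ y, f x y ∂ν ∂μ = ∫ y, ∫ x, f x y ∂μ ∂ν := by
  have hf_swap : AEStronglyMeasurable (uncurry fun y x => f x y) (ν.prod μ) := hf.prod_swap
  have hf0_swap : 0 ≤ᵐ[ν.prod μ] uncurry fun y x => f x y :=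
    (Measure.measurePreserving_swap (μ := ν) (ν := μ)).quasiMeasurePreserving.ae hf0
  rw [integral_integral_eq_toReal_lintegral_lintegral hf hf0 hx,
    integral_integral_eq_toReal_lintegral_lintegral hf_swap hf0_swap hy,
    lintegral_lintegral_swap hf.aemeasurable.ennreal_ofReal]

end Tonelli

theorem exp_neg_one_add_mul (x y : ℝ) : exp (-((1 + x) * y)) = exp (-y) * exp (-(y * x)) := by
  rw [← exp_add]
  ring_nf

theorem integral_rpow_div_one_add_eq_integral_integral {s : ℝ} (hs0 : 0 < s) :
    ∫ x in Ioi (0 : ℝ), x ^ (s - 1) / (1 + x) =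
      ∫ y in Ioi (0 : ℝ), ∫ x in Ioi (0 : ℝ), x ^ (s - 1) * exp (-((1 + x) * y)) := by
  set k : ℝ → ℝ → ℝ := fun x y => x ^ (s - 1) * exp (-((1 + x) * y)) with hk
  have hk_meas : AEStronglyMeasurable (uncurry k)
      ((volume.restrict (Ioi (0 : ℝ))).prod (volume.restrict (Ioi 0))) := by
    apply Measurable.aestronglyMeasurable; fun_prop
  have hk_nonneg :
      0 ≤ᵐ[(volume.restrict (Ioi (0 : ℝ))).prod (volume.restrict (Ioi 0))] uncurry k := by
    rw [Measure.prod_restrict]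
    refine ae_restrict_of_forall_mem (measurableSet_Ioi.prod measurableSet_Ioi) fun p hp => ?_
    have : 0 < p.1 := hp.1
    simp only [uncurry, hk]
    positivity
  have hk_int_right : ∀ x ∈ Ioi (0 : ℝ), Integrable (k x) (volume.restrict (Ioi 0)) := by
    intro x hx
    have hx1 : 0 < 1 + x := by linarith [mem_Ioi.mp hx]
    simpa only [hk, neg_mul] using (exp_neg_integrableOn_Ioi 0 hx1).const_mul (x ^ (s - 1))
  have hk_int_left : ∀ y ∈ Ioi (0 : ℝ), Integrable (k · y) (volume.restrict (Ioi 0)) := by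
    intro y hy
    simpa only [hk, exp_neg_one_add_mul, mul_left_comm, rpow_one, neg_mul] using
      (integrableOn_rpow_mul_exp_neg_mul_rpow (by linarith) zero_lt_one hy).const_mul (exp (-y))
  have hk_right : ∀ x ∈ Ioi (0 : ℝ), ∫ y in Ioi 0, k x y = x ^ (s - 1) / (1 + x) := by
    intro x hx
    have hx1 : 0 < 1 + x := by linarith [mem_Ioi.mp hx]
    simpa [hk, integral_const_mul, div_eq_mul_inv] using
      congrArg (x ^ (s - 1) * ·) (integral_rpow_mul_exp_neg_mul_Ioi one_pos hx1)
  rw [← setIntegral_congr_fun measurableSet_Ioi hk_right]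
  exact integral_integral_swap_of_nonneg hk_meas hk_nonneg
    ((ae_restrict_iff' measurableSet_Ioi).mpr (ae_of_all _ hk_int_right))
    ((ae_restrict_iff' measurableSet_Ioi).mpr (ae_of_all _ hk_int_left))

theorem integral_rpow_div_one_add {s : ℝ} (hs0 : 0 < s) (hs1 : s < 1) :
    ∫ x in Ioi (0 : ℝ), x ^ (s - 1) / (1 + x) = Gamma s * Gamma (1 - s) := by
  have h_inner : ∀ y ∈ Ioi (0 : ℝ), ∫ x in Ioi 0, x ^ (s - 1) * exp (-((1 + x) * y)) =
      Gamma s * (exp (-y) * y ^ (1 - s - 1)) := by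
    intro y hy
    have hy0 : 0 < y := mem_Ioi.mp hy
    simp_rw [exp_neg_one_add_mul, mul_left_comm _ (exp (-y))]
    rw [integral_const_mul, integral_rpow_mul_exp_neg_mul_Ioi hs0 hy0, one_div,
      inv_rpow hy0.le, ← rpow_neg hy0.le]
    ring_nf
  rw [integral_rpow_div_one_add_eq_integral_integral hs0,
    setIntegral_congr_fun measurableSet_Ioi h_inner, integral_const_mul,
    Gamma_eq_integral (by linarith : 0 < 1 - s)]

theorem integral_rpow_div_add {s t : ℝ} (hs0 : 0 < s) (hs1 : s < 1) (ht : 0 < t) :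
    ∫ y in Ioi (0 : ℝ), y ^ (s - 1) / (y + t) = t ^ (s - 1) * (Gamma s * Gamma (1 - s)) := by
  have h_scale : ∀ x ∈ Ioi (0 : ℝ),
      (t * x) ^ (s - 1) / (t * x + t) = t ^ (s - 1) * t⁻¹ * (x ^ (s - 1) / (1 + x)) := by
    intro x hx
    have hx1 : 0 < 1 + x := by linarith [mem_Ioi.mp hx]
    rw [mul_rpow ht.le (mem_Ioi.mp hx).le, show t * x + t = t * (1 + x) by ring]
    field_simp
  calc ∫ y in Ioi (0 : ℝ), y ^ (s - 1) / (y + t)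
      = t • ∫ x in Ioi (0 : ℝ), (t * x) ^ (s - 1) / (t * x + t) := by
        rw [integral_comp_mul_left_Ioi' (fun y => y ^ (s - 1) / (y + t)) 0 ht, mul_zero]
    _ = t ^ (s - 1) * (Gamma s * Gamma (1 - s)) := by
        rw [setIntegral_congr_fun measurableSet_Ioi h_scale, integral_const_mul,
          integral_rpow_div_one_add hs0 hs1, smul_eq_mul]
        field_simp

theorem integral_rpow_div_rpow_add {p α t : ℝ} (hp : 0 < p) (hpα : p < α) (ht : 0 < t) :
    ∫ u in Ioi (0 : ℝ), u ^ (p - 1) / (u ^ α + t) =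
      t ^ (p / α - 1) / α * (Gamma (p / α) * Gamma (1 - p / α)) := by
  have hα : 0 < α := hp.trans hpα
  have h_subst : ∀ u ∈ Ioi (0 : ℝ), u ^ (p - 1) / (u ^ α + t) =
      (α * u ^ (α - 1)) • (α⁻¹ * ((u ^ α) ^ (p / α - 1) / (u ^ α + t))) := by
    intro u hu
    have hu0 : 0 < u := mem_Ioi.mp hu
    rw [smul_eq_mul, ← rpow_mul hu0.le, show α * (p / α - 1) = p - α by field_simp,
      show p - 1 = (α - 1) + (p - α) by ring, rpow_add hu0]
    field_simp
  rw [setIntegral_congr_fun measurableSet_Ioi h_subst,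
    integral_comp_rpow_Ioi_of_pos (g := fun y => α⁻¹ * (y ^ (p / α - 1) / (y + t))) hα,
    integral_const_mul, integral_rpow_div_add (by positivity) ((div_lt_one hα).mpr hpα) ht]
  ring

/-- The key radial interference integral: for `α > 2` and `t > 0`,
`∫_0^∞ (1 − 1/(1 + t u^{−α})) u du = (t^{2/α}/2) Γ(1+2/α) Γ(1−2/α)`, and
equivalently `∫_0^∞ (t/(u^α + t)) u du = (t^{2/α}/2) Γ(1+2/α) Γ(1−2/α)`. -/
theorem radial_interference_integral
    (α t : ℝ) (hα : 2 < α) (ht : 0 < t) :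
    (∫ u in Set.Ioi (0 : ℝ), (1 - 1 / (1 + t * u ^ (-α))) * u) =
      t ^ (2 / α) / 2 * Real.Gamma (1 + 2 / α) * Real.Gamma (1 - 2 / α) ∧
    (∫ u in Set.Ioi (0 : ℝ), t / (u ^ α + t) * u) =
      t ^ (2 / α) / 2 * Real.Gamma (1 + 2 / α) * Real.Gamma (1 - 2 / α) := by
  have h_integrand : ∀ u ∈ Ioi (0 : ℝ),
      (1 - 1 / (1 + t * u ^ (-α))) * u = t / (u ^ α + t) * u := by
    intro u hu
    have hu0 : 0 < u ^ α := rpow_pos_of_pos (mem_Ioi.mp hu) α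
    rw [rpow_neg (mem_Ioi.mp hu).le]
    field_simp
    ring
  have h_mellin : ∀ u ∈ Ioi (0 : ℝ),
      t / (u ^ α + t) * u = t * (u ^ ((2 : ℝ) - 1) / (u ^ α + t)) := by
    intro u _
    rw [show (2 : ℝ) - 1 = 1 by norm_num, rpow_one]
    ring
  have h_value : ∫ u in Ioi (0 : ℝ), t / (u ^ α + t) * u =
      t ^ (2 / α) / 2 * Gamma (1 + 2 / α) * Gamma (1 - 2 / α) := by
    rw [setIntegral_congr_fun measurableSet_Ioi h_mellin, integral_const_mul,
      integral_rpow_div_rpow_add two_pos hα ht, rpow_sub_one ht.ne', add_comm 1,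
      Gamma_add_one (by positivity)]
    field_simp
  exact ⟨(setIntegral_congr_fun measurableSet_Ioi h_integrand).trans h_value, h_value⟩
end

section
/- For α > 2, t > 0, and the family of Rician densities f_{U|V}(u|v), the double integral ∫_0^∞ (∫_0^∞ (t/(u^α + t)) f_{U|V}(u|v) du) v dv equals ∫_0^∞ (t/(u^α + t)) u du = (t^{2/α}/2) Γ(1 + 2/α) Γ(1 − 2/α); hence the upper-bounded interference of a Thomas cluster process with cluster density λ_p and mean p n̄ devices per cluster coincides with that of a homogeneous PPP of intensity p n̄ λ_p, and its Laplace transform lower bound equals exp(−π p n̄ λ_p t^{2/α} Γ(1+2/α) Γ(1−2/α)). -/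
open MeasureTheory Real

/-- Rician density of `‖x + y‖` given `‖x‖ = v`, for a Gaussian displacement `y`
with per-coordinate variance `σ²`. -/
noncomputable def ricePDF (σ u v : ℝ) : ℝ :=
  u / σ ^ 2 * Real.exp (-(u ^ 2 + v ^ 2) / (2 * σ ^ 2)) * besselI0 (u * v / σ ^ 2)

open Set

set_option maxHeartbeats 1000000

lemma besselI0_continuous : Continuous besselI0 := by
  unfold besselI0
  refine continuous_const.mul ?_
  exact intervalIntegral.continuous_parametric_intervalIntegral_of_continuous'
    (f := fun z θ => Real.exp (z * Real.cos θ)) (by fun_prop) 0 π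

lemma besselI0_nonneg (z : ℝ) : 0 ≤ besselI0 z := by
  unfold besselI0
  refine mul_nonneg (by positivity) ?_
  refine intervalIntegral.integral_nonneg pi_pos.le fun θ _ => (Real.exp_pos _).le

lemma ricePDF_nonneg {σ u : ℝ} (hu : 0 ≤ u) (v : ℝ) : 0 ≤ ricePDF σ u v :=
  mul_nonneg (mul_nonneg (by positivity) (Real.exp_pos _).le) (besselI0_nonneg _)

lemma ricePDF_symm (σ u v : ℝ) : ricePDF σ u v * v = ricePDF σ v u * u := by
  unfold ricePDF
  rw [show u ^ 2 + v ^ 2 = v ^ 2 + u ^ 2 by ring, show u * v = v * u by ring]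
  ring

lemma ricePDF_continuous (σ : ℝ) : Continuous fun p : ℝ × ℝ => ricePDF σ p.1 p.2 := by
  unfold ricePDF
  have h1 : Continuous fun p : ℝ × ℝ => p.1 / σ ^ 2 := continuous_fst.div_const _
  have h2 : Continuous fun p : ℝ × ℝ =>
      Real.exp (-(p.1 ^ 2 + p.2 ^ 2) / (2 * σ ^ 2)) := by fun_prop
  have h3 : Continuous fun p : ℝ × ℝ => besselI0 (p.1 * p.2 / σ ^ 2) :=
    besselI0_continuous.comp ((continuous_fst.mul continuous_snd).div_const _)
  exact (h1.mul h2).mul h3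

/-- A linear-times-Gaussian function with linear drift in the exponent is integrable. -/
lemma integrable_mul_exp_quadratic {b : ℝ} (hb : 0 < b) (c : ℝ) :
    Integrable (fun r : ℝ => r * Real.exp (-b * r ^ 2 + c * r)) := by
  set m := c / (2 * b) with hm
  have hx : Integrable (fun x : ℝ => x * Real.exp (-b * x ^ 2)) := by
    simpa [Real.rpow_one] using integrable_rpow_mul_exp_neg_mul_sq hb (s := 1) (by norm_num)
  have hconst : Integrable (fun x : ℝ => m * Real.exp (-b * x ^ 2)) :=
    (integrable_exp_neg_mul_sq hb).const_mul m
  have h1 : Integrable (fun x : ℝ => (x + m) * Real.exp (-b * x ^ 2)) := by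
    have := hx.add hconst
    refine this.congr (Filter.Eventually.of_forall fun x => ?_)
    simp only [Pi.add_apply]
    ring
  have h2 := (h1.comp_sub_right m).const_mul (Real.exp (b * m ^ 2))
  refine h2.congr (Filter.Eventually.of_forall fun r => ?_)
  show Real.exp (b * m ^ 2) * ((r - m + m) * Real.exp (-b * (r - m) ^ 2))
      = r * Real.exp (-b * r ^ 2 + c * r)
  rw [sub_add_cancel, mul_comm (Real.exp _) _, mul_assoc, ← Real.exp_add]
  have hb' : (b : ℝ) ≠ 0 := ne_of_gt hb
  congr 2
  rw [hm]
  field_simp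
  ring

lemma integrableOn_gauss_lin {b : ℝ} (hb : 0 < b) (c d : ℝ) :
    IntegrableOn (fun r : ℝ => r * Real.exp (-b * r ^ 2 + c * r + d)) (Ioi 0) := by
  have := (integrable_mul_exp_quadratic hb c).const_mul (Real.exp d)
  refine (this.congr (Filter.Eventually.of_forall fun r => ?_)).integrableOn
  show Real.exp d * (r * Real.exp (-b * r ^ 2 + c * r)) = _
  rw [show Real.exp d * (r * Real.exp (-b * r ^ 2 + c * r))
      = r * (Real.exp (-b * r ^ 2 + c * r) * Real.exp d) from by ring, ← Real.exp_add]

/-- Angular integral: `∫_{-π}^{π} exp (a cos θ) dθ = 2π I₀(a)`. -/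
lemma angular_integral (a : ℝ) :
    ∫ θ in Ioo (-π) π, Real.exp (a * Real.cos θ) = 2 * π * besselI0 a := by
  have hcont : Continuous fun θ : ℝ => Real.exp (a * Real.cos θ) := by fun_prop
  have h1 : ∫ θ in Ioo (-π) π, Real.exp (a * Real.cos θ)
      = ∫ θ in (-π)..π, Real.exp (a * Real.cos θ) := by
    rw [intervalIntegral.integral_of_le (by linarith [pi_pos]), integral_Ioc_eq_integral_Ioo]
  have h2 : (∫ θ in (-π)..(0 : ℝ), Real.exp (a * Real.cos θ))
      = ∫ θ in (0 : ℝ)..π, Real.exp (a * Real.cos θ) := by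
    have := intervalIntegral.integral_comp_neg (a := (0 : ℝ)) (b := π)
      (fun θ => Real.exp (a * Real.cos θ))
    simp only [Real.cos_neg, neg_zero] at this
    rw [← this]
  have h3 := intervalIntegral.integral_add_adjacent_intervals
    (hcont.intervalIntegrable (μ := volume) (-π) 0)
    (hcont.intervalIntegrable (μ := volume) 0 π)
  rw [h1, ← h3, h2, besselI0]
  field_simp
  ring

/-- Shifted Gaussian integral. -/
lemma gauss_shift {σ : ℝ} (hσ : 0 < σ) (w : ℝ) :
    ∫ x : ℝ, Real.exp (-(x - w) ^ 2 / (2 * σ ^ 2)) = Real.sqrt (2 * π * σ ^ 2) := by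
  have hb : 0 < (2 * σ ^ 2)⁻¹ := by positivity
  have h1 : ∀ x : ℝ, -(x - w) ^ 2 / (2 * σ ^ 2) = -(2 * σ ^ 2)⁻¹ * (x - w) ^ 2 := by
    intro x; field_simp
  calc ∫ x : ℝ, Real.exp (-(x - w) ^ 2 / (2 * σ ^ 2))
      = ∫ x : ℝ, Real.exp (-(2 * σ ^ 2)⁻¹ * (x - w) ^ 2) := by simp_rw [h1]
    _ = ∫ x : ℝ, Real.exp (-(2 * σ ^ 2)⁻¹ * x ^ 2) :=
        integral_sub_right_eq_self (fun x => Real.exp (-(2 * σ ^ 2)⁻¹ * x ^ 2)) w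
    _ = Real.sqrt (π / (2 * σ ^ 2)⁻¹) := integral_gaussian _
    _ = Real.sqrt (2 * π * σ ^ 2) := by congr 1; field_simp

/-- Normalization of the Rician density, by polar coordinates. -/
lemma rice_norm {σ : ℝ} (hσ : 0 < σ) {w : ℝ} (hw : 0 ≤ w) :
    IntegrableOn (fun v => ricePDF σ v w) (Ioi 0) ∧
      ∫ v in Ioi 0, ricePDF σ v w = 1 := by
  set c : ℝ := (2 * π * σ ^ 2)⁻¹ with hc
  have hcpos : 0 < c := by rw [hc]; positivity
  set f : ℝ × ℝ → ℝ := fun z => c * Real.exp (-((z.1 - w) ^ 2 + z.2 ^ 2) / (2 * σ ^ 2))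
    with hf
  -- total mass of the 2D Gaussian
  have hA : ∫ z : ℝ × ℝ, f z = 1 := by
    have hsplit : ∀ z : ℝ × ℝ, f z
        = (c * Real.exp (-(z.1 - w) ^ 2 / (2 * σ ^ 2))) *
            Real.exp (-(z.2 - 0) ^ 2 / (2 * σ ^ 2)) := by
      intro z
      have hx : -((z.1 - w) ^ 2 + z.2 ^ 2) / (2 * σ ^ 2)
          = -(z.1 - w) ^ 2 / (2 * σ ^ 2) + -(z.2 - 0) ^ 2 / (2 * σ ^ 2) := by ring
      simp only [hf]
      rw [hx, Real.exp_add, mul_assoc]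
    have h2 : ∫ z : ℝ × ℝ, (fun x : ℝ => c * Real.exp (-(x - w) ^ 2 / (2 * σ ^ 2))) z.1 *
        (fun y : ℝ => Real.exp (-(y - 0) ^ 2 / (2 * σ ^ 2))) z.2
        = (∫ x : ℝ, c * Real.exp (-(x - w) ^ 2 / (2 * σ ^ 2))) *
          ∫ y : ℝ, Real.exp (-(y - 0) ^ 2 / (2 * σ ^ 2)) := by
      rw [Measure.volume_eq_prod]
      exact integral_prod_mul (L := ℝ) (f := fun x : ℝ => c * Real.exp (-(x - w) ^ 2 / (2 * σ ^ 2)))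
        (g := fun y : ℝ => Real.exp (-(y - 0) ^ 2 / (2 * σ ^ 2)))
    have h3 : ∫ z : ℝ × ℝ, f z = ∫ z : ℝ × ℝ,
        (fun x : ℝ => c * Real.exp (-(x - w) ^ 2 / (2 * σ ^ 2))) z.1 *
        (fun y : ℝ => Real.exp (-(y - 0) ^ 2 / (2 * σ ^ 2))) z.2 :=
      integral_congr_ae (Filter.Eventually.of_forall fun z => hsplit z)
    have hgw : ∀ y : ℝ, Real.exp (-(y - 0) ^ 2 / (2 * σ ^ 2))
        = Real.exp (-(y - (0:ℝ)) ^ 2 / (2 * σ ^ 2)) := fun y => rfl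
    rw [h3, h2, integral_const_mul, gauss_shift hσ w, gauss_shift hσ 0]
    rw [mul_assoc, Real.mul_self_sqrt (by positivity), hc]
    field_simp
  -- the polar-coordinates integrand
  set G : ℝ × ℝ → ℝ := fun p => p.1 * f (p.1 * Real.cos p.2, p.1 * Real.sin p.2) with hG
  have hexp : ∀ r θ : ℝ,
      -((r * Real.cos θ - w) ^ 2 + (r * Real.sin θ) ^ 2) / (2 * σ ^ 2)
        = -(r ^ 2 + w ^ 2) / (2 * σ ^ 2) + r * w / σ ^ 2 * Real.cos θ := by
    intro r θ
    have h := Real.sin_sq θ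
    rw [mul_pow r (Real.sin θ) 2, h]
    field_simp
    ring
  have hGval : ∀ p : ℝ × ℝ, G p
      = p.1 * c * Real.exp (-(p.1 ^ 2 + w ^ 2) / (2 * σ ^ 2)) *
          Real.exp (p.1 * w / σ ^ 2 * Real.cos p.2) := by
    intro p
    rw [hG, hf]
    simp only
    rw [hexp p.1 p.2, Real.exp_add]
    ring
  -- integrability of `G` on the polar target set
  have hGcont : Continuous G := by
    have := ricePDF_continuous σ
    rw [hG, hf]
    fun_prop
  set ψ : ℝ → ℝ := fun r =>
    c * (r * Real.exp (-(2 * σ ^ 2)⁻¹ * r ^ 2 + w / σ ^ 2 * r + -(w ^ 2) / (2 * σ ^ 2)))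
    with hψ
  have hψint : IntegrableOn ψ (Ioi 0) :=
    (integrableOn_gauss_lin (b := (2 * σ ^ 2)⁻¹) (by positivity) _ _).const_mul c
  have hprodmeas : ((volume : Measure ℝ).restrict (Ioi 0)).prod
      ((volume : Measure ℝ).restrict (Ioo (-π) π))
      = (volume : Measure (ℝ × ℝ)).restrict (Ioi (0:ℝ) ×ˢ Ioo (-π) π) := by
    rw [Measure.prod_restrict, ← Measure.volume_eq_prod]
  have hGint : Integrable G (((volume : Measure ℝ).restrict (Ioi 0)).prod
      ((volume : Measure ℝ).restrict (Ioo (-π) π))) := by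
    have hmaj : Integrable (fun p : ℝ × ℝ => ψ p.1 * 1)
        (((volume : Measure ℝ).restrict (Ioi 0)).prod
          ((volume : Measure ℝ).restrict (Ioo (-π) π))) :=
      hψint.mul_prod (integrable_const 1)
    refine Integrable.mono' (by simpa using hmaj) hGcont.aestronglyMeasurable ?_
    rw [hprodmeas]
    refine (ae_restrict_mem ((measurableSet_Ioi).prod measurableSet_Ioo)).mono ?_
    rintro ⟨r, θ⟩ ⟨hr, hθ⟩
    simp only [mem_Ioi] at hr
    have hGnn : 0 ≤ G (r, θ) := by
      rw [hGval]
      have := hcpos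
      positivity
    rw [Real.norm_eq_abs, abs_of_nonneg hGnn, hGval]
    simp only [hψ, mul_one]
    have hcos : Real.cos θ ≤ 1 := Real.cos_le_one θ
    have hexple : Real.exp (-(r ^ 2 + w ^ 2) / (2 * σ ^ 2)) *
        Real.exp (r * w / σ ^ 2 * Real.cos θ)
        ≤ Real.exp (-(2 * σ ^ 2)⁻¹ * r ^ 2 + w / σ ^ 2 * r + -(w ^ 2) / (2 * σ ^ 2)) := by
      rw [← Real.exp_add]
      apply Real.exp_le_exp.2
      have h1 : r * w / σ ^ 2 * Real.cos θ ≤ r * w / σ ^ 2 := by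
        have hrge : 0 ≤ r * w / σ ^ 2 := by positivity
        nlinarith
      have h2 : -(r ^ 2 + w ^ 2) / (2 * σ ^ 2) + r * w / σ ^ 2
          = -(2 * σ ^ 2)⁻¹ * r ^ 2 + w / σ ^ 2 * r + -(w ^ 2) / (2 * σ ^ 2) := by
        field_simp; ring
      linarith [h1, h2]
    calc r * c * Real.exp (-(r ^ 2 + w ^ 2) / (2 * σ ^ 2)) *
          Real.exp (r * w / σ ^ 2 * Real.cos θ)
        ≤ r * c * Real.exp (-(2 * σ ^ 2)⁻¹ * r ^ 2 + w / σ ^ 2 * r + -(w ^ 2) / (2 * σ ^ 2)) := by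
          rw [mul_assoc]
          exact mul_le_mul_of_nonneg_left hexple (by positivity)
      _ = c * (r * Real.exp (-(2 * σ ^ 2)⁻¹ * r ^ 2 + w / σ ^ 2 * r
            + -(w ^ 2) / (2 * σ ^ 2))) := by ring
  -- the θ-integral of G equals the Rician density
  have hθint : ∀ r : ℝ, ∫ θ in Ioo (-π) π, G (r, θ) = ricePDF σ r w := by
    intro r
    have : ∀ θ : ℝ, G (r, θ)
        = (r * c * Real.exp (-(r ^ 2 + w ^ 2) / (2 * σ ^ 2))) *
            Real.exp (r * w / σ ^ 2 * Real.cos θ) := fun θ => hGval (r, θ)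
    simp_rw [this]
    rw [integral_const_mul, angular_integral]
    rw [ricePDF, hc]
    have hπ : (π : ℝ) ≠ 0 := pi_ne_zero
    have hσ' : (σ : ℝ) ≠ 0 := ne_of_gt hσ
    field_simp
  -- change of variables
  have hpolar := integral_comp_polarCoord_symm f
  have htarget : polarCoord.target = Ioi (0 : ℝ) ×ˢ Ioo (-π) π := rfl
  have hsymm : ∀ p : ℝ × ℝ, p.1 • f (polarCoord.symm p) = G p := by
    intro p
    rw [hG]
    rfl
  rw [htarget] at hpolar
  simp_rw [hsymm] at hpolar
  -- from set integral to iterated integral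
  have hset : ∫ p in Ioi (0 : ℝ) ×ˢ Ioo (-π) π, G p
      = ∫ r in Ioi (0 : ℝ), ∫ θ in Ioo (-π) π, G (r, θ) := by
    rw [← hprodmeas]
    exact integral_prod G hGint
  have hint : IntegrableOn (fun v => ricePDF σ v w) (Ioi 0) := by
    have := hGint.integral_prod_left
    refine this.congr (Filter.Eventually.of_forall fun r => ?_)
    exact hθint r
  refine ⟨hint, ?_⟩
  have : ∫ r in Ioi (0 : ℝ), ricePDF σ r w
      = ∫ r in Ioi (0 : ℝ), ∫ θ in Ioo (-π) π, G (r, θ) := by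
    refine integral_congr_ae (Filter.Eventually.of_forall fun r => (hθint r).symm)
  rw [this, ← hset, hpolar, hA]

/-- The radial Mellin-type integral, computed via the exponential representation
of `t / (u^α + t)` and Gamma integrals. -/
lemma mellin_calc {α t : ℝ} (hα : 2 < α) (ht : 0 < t) :
    IntegrableOn (fun u => t / (u ^ α + t) * u) (Ioi 0) ∧
      ∫ u in Ioi 0, t / (u ^ α + t) * u
        = t ^ (2 / α) / 2 * Real.Gamma (1 + 2 / α) * Real.Gamma (1 - 2 / α) := by
  have hα0 : (0 : ℝ) < α := by linarith
  have hα1 : (1 : ℝ) < α := by linarith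
  have h2α : (0 : ℝ) < 2 / α := by positivity
  have h2α1 : 2 / α < 1 := by rw [div_lt_one hα0]; linarith
  set μ0 : Measure ℝ := volume.restrict (Ioi 0) with hμ0
  set f : ℝ × ℝ → ℝ := fun p => p.1 * Real.exp (-p.2 * p.1 ^ α) * (t * Real.exp (-p.2 * t))
    with hfdef
  have hrpow : Measurable fun x : ℝ => x ^ α := (Real.continuous_rpow_const hα0.le).measurable
  have hfmeas : Measurable f := by
    apply Measurable.mul
    · exact measurable_fst.mul ((measurable_snd.neg.mul (hrpow.comp measurable_fst)).exp)
    · exact measurable_const.mul ((measurable_snd.neg.mul_const t).exp)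
  -- integrability of slices in `u` for each fixed `s > 0`
  have hslice : ∀ s : ℝ, s ∈ Ioi (0:ℝ) → IntegrableOn (fun u => f (u, s)) (Ioi 0) := by
    intro s hs
    have h1 : IntegrableOn (fun u : ℝ => u ^ (1:ℝ) * Real.exp (-s * u ^ α)) (Ioi 0) :=
      integrableOn_rpow_mul_exp_neg_mul_rpow (by norm_num) hα0 hs
    have h2 : IntegrableOn (fun u : ℝ => u * Real.exp (-s * u ^ α)) (Ioi 0) := by
      refine h1.congr (Filter.Eventually.of_forall fun u => ?_)
      simp only [Real.rpow_one]
    exact h2.mul_const (t * Real.exp (-s * t))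
  -- inner integral over `u`
  have huint : ∀ s : ℝ, s ∈ Ioi (0:ℝ) → ∫ u in Ioi (0:ℝ), f (u, s)
      = (s ^ (-(2:ℝ)/α) * (1/α) * Real.Gamma (2/α)) * (t * Real.exp (-s * t)) := by
    intro s hs
    have e1 := integral_rpow_mul_exp_neg_mul_rpow (p := α) (q := 1) (b := s) hα0 (by norm_num) hs
    simp only [Real.rpow_one, show ((1:ℝ)+1) = 2 by norm_num] at e1
    have e2 : ∫ u in Ioi (0:ℝ), f (u, s)
        = (∫ u in Ioi (0:ℝ), u * Real.exp (-s * u ^ α)) * (t * Real.exp (-s * t)) := by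
      rw [← integral_mul_const]
    rw [e2, e1]
  -- integrability of the outer integrand in `s`
  have hsfun : IntegrableOn (fun s : ℝ =>
      (s ^ (-(2:ℝ)/α) * (1/α) * Real.Gamma (2/α)) * (t * Real.exp (-s * t))) (Ioi 0) := by
    have h1 : IntegrableOn (fun s : ℝ => s ^ (-(2:ℝ)/α) * Real.exp (-t * s ^ (1:ℝ))) (Ioi 0) :=
      integrableOn_rpow_mul_exp_neg_mul_rpow (by rw [neg_div]; linarith) one_pos ht
    refine (h1.mul_const ((1/α) * Real.Gamma (2/α) * t)).congr
      (Filter.Eventually.of_forall fun s => ?_)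
    simp only [Real.rpow_one, show -t * s = -s * t from by ring]
    ring
  -- integrability on the product
  have hf_int : Integrable f (μ0.prod μ0) := by
    rw [integrable_prod_iff' hfmeas.aestronglyMeasurable]
    constructor
    · exact (ae_restrict_mem measurableSet_Ioi).mono fun s hs => hslice s hs
    · refine hsfun.congr ?_
      refine (ae_restrict_mem measurableSet_Ioi).mono fun s hs => ?_
      have hnn : ∫ u in Ioi (0:ℝ), ‖f (u, s)‖ = ∫ u in Ioi (0:ℝ), f (u, s) := by
        refine setIntegral_congr_fun measurableSet_Ioi fun u hu => ?_
        rw [Real.norm_eq_abs, abs_of_nonneg]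
        have hu' : (0:ℝ) < u := hu
        have := Real.exp_pos (-s * u ^ α)
        have := Real.exp_pos (-s * t)
        simp only [hfdef]
        positivity
      show (s ^ (-(2:ℝ)/α) * (1/α) * Real.Gamma (2/α)) * (t * Real.exp (-s * t))
          = ∫ u in Ioi (0:ℝ), ‖f (u, s)‖
      rw [hnn, huint s hs]
  -- inner integral over `s`
  have hsint : ∀ u : ℝ, u ∈ Ioi (0:ℝ) → ∫ s in Ioi (0:ℝ), f (u, s) = t / (u ^ α + t) * u := by
    intro u hu
    have hu' : (0:ℝ) < u := hu
    have hr : 0 < u ^ α + t := add_pos (Real.rpow_pos_of_pos hu' α) ht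
    have e0 : ∀ s : ℝ, f (u, s)
        = (u * t) * (s ^ ((1:ℝ)-1) * Real.exp (-((u ^ α + t) * s))) := by
      intro s
      simp only [hfdef]
      rw [show ((1:ℝ)-1) = 0 by norm_num, Real.rpow_zero, one_mul]
      rw [show u * Real.exp (-s * u ^ α) * (t * Real.exp (-s * t))
          = (u * t) * (Real.exp (-s * u ^ α) * Real.exp (-s * t)) from by ring, ← Real.exp_add]
      congr 2
      ring
    calc ∫ s in Ioi (0:ℝ), f (u, s)
        = ∫ s in Ioi (0:ℝ), (u * t) * (s ^ ((1:ℝ)-1) * Real.exp (-((u ^ α + t) * s))) :=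
          setIntegral_congr_fun measurableSet_Ioi fun s _ => e0 s
      _ = (u * t) * ((1/(u ^ α + t)) ^ (1:ℝ) * Real.Gamma 1) := by
          rw [integral_const_mul, integral_rpow_mul_exp_neg_mul_Ioi one_pos hr]
      _ = t / (u ^ α + t) * u := by
          rw [Real.Gamma_one, Real.rpow_one]
          field_simp
  -- Fubini
  have hswap := MeasureTheory.integral_integral_swap (μ := μ0) (ν := μ0)
    (f := fun u s => f (u, s)) hf_int
  -- the outer integral over `s`
  have houter : ∫ s in Ioi (0:ℝ), ∫ u in Ioi (0:ℝ), f (u, s)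
      = t ^ (2/α) / 2 * Real.Gamma (1 + 2/α) * Real.Gamma (1 - 2/α) := by
    have h1 : ∫ s in Ioi (0:ℝ), ∫ u in Ioi (0:ℝ), f (u, s)
        = ∫ s in Ioi (0:ℝ), (s ^ (-(2:ℝ)/α) * (1/α) * Real.Gamma (2/α)) * (t * Real.exp (-s * t)) :=
      setIntegral_congr_fun measurableSet_Ioi fun s hs => huint s hs
    have h2 : ∀ s : ℝ, (s ^ (-(2:ℝ)/α) * (1/α) * Real.Gamma (2/α)) * (t * Real.exp (-s * t))
        = ((1/α) * Real.Gamma (2/α) * t) * (s ^ ((1 - 2/α) - 1) * Real.exp (-(t * s))) := by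
      intro s
      rw [show (1 - 2/α) - 1 = -(2:ℝ)/α from by ring, show -(t * s) = -s * t from by ring]
      ring
    rw [h1]
    simp_rw [h2]
    rw [integral_const_mul, integral_rpow_mul_exp_neg_mul_Ioi (by linarith) ht]
    rw [show ((1:ℝ)/t) ^ (1 - 2/α) = t ^ (-(1 - 2/α)) from by
      rw [one_div, Real.inv_rpow ht.le, ← Real.rpow_neg ht.le]]
    have hg : Real.Gamma (1 + 2/α) = (2/α) * Real.Gamma (2/α) := by
      rw [add_comm, Real.Gamma_add_one (ne_of_gt h2α)]
    have ht1 : t * t ^ (-(1 - 2/α)) = t ^ (2/α) := by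
      nth_rewrite 1 [← Real.rpow_one t]
      rw [← Real.rpow_add ht]
      congr 1
      ring
    rw [hg]
    calc (1/α * Real.Gamma (2/α) * t) * (t ^ (-(1 - 2/α)) * Real.Gamma (1 - 2/α))
        = (1/α * Real.Gamma (2/α)) * (t * t ^ (-(1 - 2/α))) * Real.Gamma (1 - 2/α) := by ring
      _ = (1/α * Real.Gamma (2/α)) * t ^ (2/α) * Real.Gamma (1 - 2/α) := by rw [ht1]
      _ = t ^ (2/α) / 2 * (2/α * Real.Gamma (2/α)) * Real.Gamma (1 - 2/α) := by ring
  -- conclude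
  constructor
  · have h := hf_int.integral_prod_left
    refine h.congr ?_
    exact (ae_restrict_mem measurableSet_Ioi).mono fun u hu => hsint u hu
  · calc ∫ u in Ioi (0:ℝ), t / (u ^ α + t) * u
        = ∫ u in Ioi (0:ℝ), ∫ s in Ioi (0:ℝ), f (u, s) :=
          setIntegral_congr_fun measurableSet_Ioi fun u hu => (hsint u hu).symm
      _ = ∫ s in Ioi (0:ℝ), ∫ u in Ioi (0:ℝ), f (u, s) := hswap
      _ = t ^ (2/α) / 2 * Real.Gamma (1 + 2/α) * Real.Gamma (1 - 2/α) := houter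

/-- By Fubini and the Rician–Rayleigh mixing identity, the double integral in the
upper-bounded Laplace transform of a Thomas cluster process reduces to the
homogeneous-PPP radial integral, so the Laplace transform lower bound of a Thomas
cluster process of cluster density `λ_p` with mean `p n̄` active devices per
cluster coincides with that of a homogeneous PPP of intensity `p n̄ λ_p`:
`exp(−π p n̄ λ_p t^{2/α} Γ(1+2/α) Γ(1−2/α))`. -/
theorem thomas_cluster_ppp_laplace_bound
    (α t σ lp p n : ℝ) (hα : 2 < α) (ht : 0 < t) (hσ : 0 < σ)
    (hlp : 0 < lp) (hp : p ∈ Set.Ioc (0 : ℝ) 1) (hn : 0 < n) :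
    (∫ v in Set.Ioi (0 : ℝ),
        (∫ u in Set.Ioi (0 : ℝ), t / (u ^ α + t) * ricePDF σ u v) * v) =
      t ^ (2 / α) / 2 * Real.Gamma (1 + 2 / α) * Real.Gamma (1 - 2 / α) ∧
    Real.exp (-(2 * π * lp * (p * n) *
        ∫ v in Set.Ioi (0 : ℝ),
          (∫ u in Set.Ioi (0 : ℝ), t / (u ^ α + t) * ricePDF σ u v) * v)) =
      Real.exp (-(π * p * n * lp * t ^ (2 / α) *
        Real.Gamma (1 + 2 / α) * Real.Gamma (1 - 2 / α))) := by
  obtain ⟨hmel_int, hmel⟩ := mellin_calc hα ht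
  have hkey : (∫ v in Set.Ioi (0:ℝ),
      (∫ u in Set.Ioi (0:ℝ), t / (u ^ α + t) * ricePDF σ u v) * v)
      = t ^ (2 / α) / 2 * Real.Gamma (1 + 2 / α) * Real.Gamma (1 - 2 / α) := by
    have hzw : ∀ v u : ℝ, t / (u ^ α + t) * ricePDF σ u v * v
        = t / (u ^ α + t) * u * ricePDF σ v u := by
      intro v u
      rw [mul_assoc, ricePDF_symm]
      ring
    -- measurability on the product
    have hFmeas : Measurable fun q : ℝ × ℝ => t / (q.2 ^ α + t) * q.2 * ricePDF σ q.1 q.2 := by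
      apply Measurable.mul
      · exact (measurable_const.div
          ((((Real.continuous_rpow_const (by linarith : (0:ℝ) ≤ α)).measurable).comp
            measurable_snd).add_const t)).mul measurable_snd
      · exact (ricePDF_continuous σ).measurable
    -- integrability on the product
    have hF_int : Integrable (fun q : ℝ × ℝ => t / (q.2 ^ α + t) * q.2 * ricePDF σ q.1 q.2)
        ((volume.restrict (Set.Ioi 0)).prod (volume.restrict (Set.Ioi 0))) := by
      rw [integrable_prod_iff' hFmeas.aestronglyMeasurable]
      constructor
      · refine (ae_restrict_mem measurableSet_Ioi).mono fun u hu => ?_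
        show Integrable (fun v : ℝ => t / (u ^ α + t) * u * ricePDF σ v u)
          (volume.restrict (Set.Ioi 0))
        exact ((rice_norm hσ (le_of_lt hu)).1.const_mul (t / (u ^ α + t) * u))
      · refine hmel_int.congr ?_
        refine (ae_restrict_mem measurableSet_Ioi).mono fun u hu => ?_
        have hu' : (0:ℝ) < u := hu
        have hden : 0 < u ^ α + t := add_pos (Real.rpow_pos_of_pos hu' α) ht
        have h1 : ∫ v in Set.Ioi (0:ℝ), ‖t / (u ^ α + t) * u * ricePDF σ v u‖
            = ∫ v in Set.Ioi (0:ℝ), t / (u ^ α + t) * u * ricePDF σ v u := by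
          refine setIntegral_congr_fun measurableSet_Ioi fun v hv => ?_
          rw [Real.norm_eq_abs, abs_of_nonneg]
          exact mul_nonneg (by positivity) (ricePDF_nonneg (le_of_lt hv) u)
        show t / (u ^ α + t) * u = ∫ v in Set.Ioi (0:ℝ), ‖t / (u ^ α + t) * u * ricePDF σ v u‖
        rw [h1, integral_const_mul, (rice_norm hσ (le_of_lt hu)).2, mul_one]
    have hswap := MeasureTheory.integral_integral_swap
      (μ := volume.restrict (Set.Ioi 0)) (ν := volume.restrict (Set.Ioi 0))
      (f := fun v u => t / (u ^ α + t) * u * ricePDF σ v u) hF_int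
    calc (∫ v in Set.Ioi (0:ℝ),
          (∫ u in Set.Ioi (0:ℝ), t / (u ^ α + t) * ricePDF σ u v) * v)
        = ∫ v in Set.Ioi (0:ℝ), ∫ u in Set.Ioi (0:ℝ), t / (u ^ α + t) * u * ricePDF σ v u := by
          refine integral_congr_ae (Filter.Eventually.of_forall fun v => ?_)
          show (∫ u in Set.Ioi (0:ℝ), t / (u ^ α + t) * ricePDF σ u v) * v
            = ∫ u in Set.Ioi (0:ℝ), t / (u ^ α + t) * u * ricePDF σ v u
          rw [← integral_mul_const]
          exact integral_congr_ae (Filter.Eventually.of_forall fun u => hzw v u)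
      _ = ∫ u in Set.Ioi (0:ℝ), ∫ v in Set.Ioi (0:ℝ), t / (u ^ α + t) * u * ricePDF σ v u :=
          hswap
      _ = ∫ u in Set.Ioi (0:ℝ), t / (u ^ α + t) * u := by
          refine setIntegral_congr_fun measurableSet_Ioi fun u hu => ?_
          rw [integral_const_mul, (rice_norm hσ (le_of_lt hu)).2, mul_one]
      _ = t ^ (2 / α) / 2 * Real.Gamma (1 + 2 / α) * Real.Gamma (1 - 2 / α) := hmel
  refine ⟨hkey, ?_⟩
  rw [hkey]
  congr 1
  ring
end

section
/- The function P(c) = ∑_{m=1}^{N_f} q_m ( c_m + (1 − c_m)(1 − e^{−λ c_m}) / 𝒵 ) is concave in c = (c_1,…,c_{N_f}) ∈ [0,1]^{N_f}, for any λ > 0, 𝒵 ≥ 1, and nonnegative weights q_m. -/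
/-!
Each summand is `x` plus the nonnegative multiple `1/𝒵` of `h(x) = (1 - x)(1 - e^{-λx})`, and
`h''(x) = -λ e^{-λx} (2 + λ(1 - x)) ≤ 0` for `x ≤ 1`. Composing with the coordinate projections
and summing with the weights `q_m ≥ 0` preserves concavity.
-/

open Real

theorem ConcaveOn.sum {𝕜 E β ι : Type*} [Semiring 𝕜] [PartialOrder 𝕜] [AddCommMonoid E]
    [AddCommMonoid β] [PartialOrder β] [IsOrderedAddMonoid β] [SMul 𝕜 E] [Module 𝕜 β]
    {s : Set E} (hs : Convex 𝕜 s) {t : Finset ι} {f : ι → E → β}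
    (hf : ∀ i ∈ t, ConcaveOn 𝕜 s (f i)) : ConcaveOn 𝕜 s fun x => ∑ i ∈ t, f i x := by
  classical
  induction t using Finset.induction_on with
  | empty => simpa using concaveOn_const 0 hs
  | insert i t hi ih =>
    simp only [Finset.sum_insert hi]
    exact (hf i (Finset.mem_insert_self i t)).add
      (ih fun j hj => hf j (Finset.mem_insert_of_mem hj))

theorem concaveOn_one_sub_mul_one_sub_exp_neg_mul {lam : ℝ} (hlam : 0 ≤ lam) :
    ConcaveOn ℝ (Set.Iic 1) fun x => (1 - x) * (1 - exp (-(lam * x))) := by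
  have hexp (x : ℝ) : HasDerivAt (fun x => exp (-(lam * x))) (-lam * exp (-(lam * x))) x := by
    simpa [mul_comm] using ((hasDerivAt_id x).const_mul lam).neg.exp
  have hf' (x : ℝ) : HasDerivAt (fun x => (1 - x) * (1 - exp (-(lam * x))))
      (exp (-(lam * x)) - 1 + lam * (1 - x) * exp (-(lam * x))) x :=
    ((hasDerivAt_id' x).const_sub 1 |>.fun_mul ((hexp x).const_sub 1)).congr_deriv (by ring)
  have hf'' (x : ℝ) : HasDerivAt (fun x => exp (-(lam * x)) - 1 + lam * (1 - x) * exp (-(lam * x)))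
      (-(lam * exp (-(lam * x)) * (2 + lam * (1 - x)))) x :=
    ((hexp x).sub_const 1 |>.add
      (((hasDerivAt_id' x).const_sub 1).const_mul lam |>.fun_mul (hexp x))).congr_deriv (by ring)
  refine concaveOn_of_hasDerivWithinAt2_nonpos (convex_Iic 1)
    (fun x _ => (hf' x).continuousAt.continuousWithinAt)
    (fun x _ => (hf' x).hasDerivWithinAt) (fun x _ => (hf'' x).hasDerivWithinAt) ?_
  intro x hx
  rw [interior_Iic, Set.mem_Iio] at hx
  have h2 : 0 ≤ 2 + lam * (1 - x) := by nlinarith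
  exact neg_nonpos.2 (mul_nonneg (mul_nonneg hlam (exp_pos _).le) h2)

theorem concaveOn_add_one_sub_mul_one_sub_exp_neg_mul_div {lam Z : ℝ} (hlam : 0 ≤ lam)
    (hZ : 0 ≤ Z) :
    ConcaveOn ℝ (Set.Iic 1) fun x => x + (1 - x) * (1 - exp (-(lam * x))) / Z :=
  ((concaveOn_id (convex_Iic 1)).add
    ((concaveOn_one_sub_mul_one_sub_exp_neg_mul hlam).smul (inv_nonneg.2 hZ))).congr
    fun x _ => by simp [div_eq_inv_mul]

/-- The lower bound on the offloading gain with one content provider,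
`P(c) = ∑_m q_m (c_m + (1 − c_m)(1 − e^{−λ c_m})/𝒵)`, is concave in
`c ∈ [0,1]^{N_f}` for any `λ > 0`, `𝒵 ≥ 1` and nonnegative weights `q_m`. -/
theorem offloading_gain_lower_bound_concave
    (Nf : ℕ) (q : Fin Nf → ℝ) (hq : ∀ m, 0 ≤ q m)
    (lam Z : ℝ) (hlam : 0 < lam) (hZ : 1 ≤ Z) :
    ConcaveOn ℝ (Set.Icc (0 : Fin Nf → ℝ) 1)
      (fun c => ∑ m, q m *
        (c m + (1 - c m) * (1 - Real.exp (-(lam * c m))) / Z)) := by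
  have hg := concaveOn_add_one_sub_mul_one_sub_exp_neg_mul_div hlam.le (zero_le_one.trans hZ)
  refine ConcaveOn.sum (convex_Icc _ _) fun m _ =>
    ((hg.comp_linearMap (LinearMap.proj (R := ℝ) (φ := fun _ => ℝ) m)).smul (hq m)).subset
      (fun c hc => hc.2 m) (convex_Icc _ _)
end
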